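/- For s ∈ ((√5−1)/2, √2/2], let ρ(s) := (1/4)·(I₄ + (1−s)·(σ3 ⊗ₖ I₂) − s·(σ1 ⊗ₖ σ1 + σ2 ⊗ₖ σ2 + σ3 ⊗ₖ σ3)). Then: (a) for every quadruple of unit vectors a1, a2, b1, b2 in EuclideanSpace ℝ (Fin 3), the CHSH value of ρ(s) at (a1,a2,b1,b2) is at most 2; and (b) the family ρ(0,1) = (1/4)·(I − s·σ1), ρ(1,1) = (1/4)·(I + s·σ1), ρ(0,2) = (1/4)·((2−s)·I − s·σ3), ρ(1,2) = (1/4)·(s·I + s·σ3) admits no finite LHS model. Hence ρ(s) is steerable by two projective measurements per party but cannot generate Bell-nonlocal correlations in the simplest scenario. -/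

import Mathlib

open Matrix Polynomial
open scoped Kronecker Matrix ComplexOrder

noncomputable section

/-- Pauli matrix σ1. -/
def σ₁ : Matrix (Fin 2) (Fin 2) ℂ := !![0, 1; 1, 0]
/-- Pauli matrix σ2. -/
def σ₂ : Matrix (Fin 2) (Fin 2) ℂ := !![0, -Complex.I; Complex.I, 0]
/-- Pauli matrix σ3. -/
def σ₃ : Matrix (Fin 2) (Fin 2) ℂ := !![1, 0; 0, -1]

/-- The three Pauli matrices. -/
def pauli : Fin 3 → Matrix (Fin 2) (Fin 2) ℂ := ![σ₁, σ₂, σ₃]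

/-- `v·σ` for a real 3-vector `v`. -/
def pauliVec (v : EuclideanSpace ℝ (Fin 3)) : Matrix (Fin 2) (Fin 2) ℂ :=
  (v 0 : ℂ) • σ₁ + (v 1 : ℂ) • σ₂ + (v 2 : ℂ) • σ₃

/-- Full correlation `E = Re tr(ρ ((a·σ) ⊗ₖ (b·σ)))`. -/
def corrE (ρ : Matrix (Fin 2 × Fin 2) (Fin 2 × Fin 2) ℂ)
    (a b : EuclideanSpace ℝ (Fin 3)) : ℝ :=
  ((ρ * (pauliVec a ⊗ₖ pauliVec b)).trace).re

/-- Correlation matrix `T i j = Re tr(ρ (σᵢ ⊗ₖ σⱼ))` of a two-qubit state. -/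
def corrMatrix (ρ : Matrix (Fin 2 × Fin 2) (Fin 2 × Fin 2) ℂ) : Matrix (Fin 3) (Fin 3) ℝ :=
  fun i j => ((ρ * (pauli i ⊗ₖ pauli j)).trace).re

/-- The CHSH value `E(1,1) + E(2,1) + E(1,2) − E(2,2)` of `ρ` at `(a1,a2,b1,b2)`. -/
def CHSHval (ρ : Matrix (Fin 2 × Fin 2) (Fin 2 × Fin 2) ℂ)
    (a1 a2 b1 b2 : EuclideanSpace ℝ (Fin 3)) : ℝ :=
  corrE ρ a1 b1 + corrE ρ a2 b1 + corrE ρ a1 b2 - corrE ρ a2 b2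

/-- The real inner product on `EuclideanSpace ℝ (Fin 3)`. -/
def rip (x y : EuclideanSpace ℝ (Fin 3)) : ℝ := inner ℝ x y

/-- Action of a real 3×3 matrix on a Euclidean 3-vector. -/
def matVec (T : Matrix (Fin 3) (Fin 3) ℝ) (v : EuclideanSpace ℝ (Fin 3)) :
    EuclideanSpace ℝ (Fin 3) :=
  (EuclideanSpace.equiv (Fin 3) ℝ).symm (T.mulVec (EuclideanSpace.equiv (Fin 3) ℝ v))

/-- `b1', b2'` is the dual basis of the pair `b1, b2` inside `span{b1, b2}`:
`⟪b'_m, b_n⟫ = δ_{mn}`. -/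
def IsDualPair (b1 b2 b1' b2' : EuclideanSpace ℝ (Fin 3)) : Prop :=
  b1' ∈ Submodule.span ℝ ({b1, b2} : Set (EuclideanSpace ℝ (Fin 3))) ∧
  b2' ∈ Submodule.span ℝ ({b1, b2} : Set (EuclideanSpace ℝ (Fin 3))) ∧
  rip b1' b1 = 1 ∧ rip b1' b2 = 0 ∧ rip b2' b1 = 0 ∧ rip b2' b2 = 1

/-- The analog CHSH value of `ρ` at `(a1,a2,b1,b2)`, with `b1', b2'` the dual basis of
`b1, b2`. -/
def ACHSHval (ρ : Matrix (Fin 2 × Fin 2) (Fin 2 × Fin 2) ℂ)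
    (a1 a2 b1 b2 b1' b2' : EuclideanSpace ℝ (Fin 3)) : ℝ :=
  ‖(corrE ρ a1 b1 + corrE ρ a2 b1) • b1' + (corrE ρ a1 b2 + corrE ρ a2 b2) • b2'‖ +
  ‖(corrE ρ a1 b1 - corrE ρ a2 b1) • b1' + (corrE ρ a1 b2 - corrE ρ a2 b2) • b2'‖

/-- A family `P a m` (outcome `a`, setting `m`) of 2×2 matrices admits a finite
local-hidden-state model. -/
def HasLHSModel (P : Fin 2 → Fin 2 → Matrix (Fin 2) (Fin 2) ℂ) : Prop :=
  ∃ (N : ℕ) (τ : Fin N → Matrix (Fin 2) (Fin 2) ℂ) (q : Fin 2 → Fin 2 → Fin N → ℝ),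
    (∀ lam, (τ lam).PosSemidef) ∧
    (∀ a m lam, 0 ≤ q a m lam ∧ q a m lam ≤ 1) ∧
    (∀ m lam, q 0 m lam + q 1 m lam = 1) ∧
    (∀ a m, P a m = ∑ lam, q a m lam • τ lam)

/-- Full correlations `E m n` admit a finite LHV-LHS model with respect to Bob's
measurement vectors `b 0, b 1`. -/
def HasLHVLHSModel (E : Fin 2 → Fin 2 → ℝ) (b : Fin 2 → EuclideanSpace ℝ (Fin 3)) : Prop :=
  ∃ (N : ℕ) (p : Fin N → ℝ) (e : Fin 2 → Fin N → ℝ)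
    (ρs : Fin N → Matrix (Fin 2) (Fin 2) ℂ),
    (∀ lam, 0 ≤ p lam) ∧ (∑ lam, p lam = 1) ∧
    (∀ m lam, e m lam ∈ Set.Icc (-1 : ℝ) 1) ∧
    (∀ lam, (ρs lam).PosSemidef ∧ (ρs lam).trace = 1) ∧
    (∀ m n, E m n = ∑ lam, p lam * e m lam * ((ρs lam * pauliVec (b n)).trace).re)

/-- Full correlations `E m n` admit a finite LHV model. -/
def HasLHVModel (E : Fin 2 → Fin 2 → ℝ) : Prop :=
  ∃ (N : ℕ) (p : Fin N → ℝ) (e f : Fin 2 → Fin N → ℝ),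
    (∀ lam, 0 ≤ p lam) ∧ (∑ lam, p lam = 1) ∧
    (∀ m lam, e m lam ∈ Set.Icc (-1 : ℝ) 1) ∧
    (∀ n lam, f n lam ∈ Set.Icc (-1 : ℝ) 1) ∧
    (∀ m n, E m n = ∑ lam, p lam * e m lam * f n lam)

/-- The effect `(1/2)(I + (−1)^i v·σ)` of the projective measurement along `v`. -/
def effect (v : EuclideanSpace ℝ (Fin 3)) (i : Fin 2) : Matrix (Fin 2) (Fin 2) ℂ :=
  (1/2 : ℝ) • ((1 : Matrix (Fin 2) (Fin 2) ℂ) + ((-1 : ℝ) ^ (i : ℕ)) • pauliVec v)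

/-!
The correlations of `ρ(s)` are `E(a, b) = -s ⟪a, b⟫`, so its CHSH value is
`-s (⟪a₁, b₁ + b₂⟫ + ⟪a₂, b₁ - b₂⟫) ≤ s (‖b₁ + b₂‖ + ‖b₁ - b₂‖) ≤ 2 √2 s ≤ 2`.

For steering, let `x, y, z` be `Re τ₀₀, Re τ₁₁, Re τ₀₁` of the hidden states, so `z² ≤ x y`.
The setting `σ₁` gives `∑ x = ∑ y = 1/2` and `∑ (q₁₀ - q₀₀) z = s/2`, while `P 1 1 = diag(s/2, 0)`
forces `q₁₁ y = 0` termwise and `∑ q₁₁ x = s/2`. Hence `z² ≤ (1 - q₁₁) x y`, and Cauchy–Schwarz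
gives `s/2 ≤ √((1 - s)/2 · 1/2)`, i.e. `s² + s ≤ 1`, which fails for `s > (√5 - 1)/2`.
-/

open scoped RealInnerProductSpace

section InnerProductSpace

variable {E : Type*} [NormedAddCommGroup E] [InnerProductSpace ℝ E]

lemma norm_add_add_norm_sub_le (u v : E) : ‖u + v‖ + ‖u - v‖ ≤ 2 * √(‖u‖ ^ 2 + ‖v‖ ^ 2) := by
  have hpar : ‖u + v‖ ^ 2 + ‖u - v‖ ^ 2 = 2 * (‖u‖ ^ 2 + ‖v‖ ^ 2) := by
    rw [norm_add_sq_real, norm_sub_sq_real]; ring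
  nlinarith [Real.sq_sqrt (by positivity : (0 : ℝ) ≤ ‖u‖ ^ 2 + ‖v‖ ^ 2),
    Real.sqrt_nonneg (‖u‖ ^ 2 + ‖v‖ ^ 2), sq_nonneg (‖u + v‖ - ‖u - v‖), norm_nonneg (u + v),
    norm_nonneg (u - v)]

lemma abs_chsh_inner_le {a₁ a₂ b₁ b₂ : E} (ha₁ : ‖a₁‖ ≤ 1) (ha₂ : ‖a₂‖ ≤ 1) (hb₁ : ‖b₁‖ ≤ 1)
    (hb₂ : ‖b₂‖ ≤ 1) : |⟪a₁, b₁⟫ + ⟪a₂, b₁⟫ + ⟪a₁, b₂⟫ - ⟪a₂, b₂⟫| ≤ 2 * √2 := by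
  have hsplit : ⟪a₁, b₁⟫ + ⟪a₂, b₁⟫ + ⟪a₁, b₂⟫ - ⟪a₂, b₂⟫ = ⟪a₁, b₁ + b₂⟫ + ⟪a₂, b₁ - b₂⟫ := by
    rw [inner_add_right, inner_sub_right]; ring
  have hsq : ‖b₁‖ ^ 2 + ‖b₂‖ ^ 2 ≤ 2 := by nlinarith [norm_nonneg b₁, norm_nonneg b₂]
  calc |⟪a₁, b₁⟫ + ⟪a₂, b₁⟫ + ⟪a₁, b₂⟫ - ⟪a₂, b₂⟫|
      ≤ |⟪a₁, b₁ + b₂⟫| + |⟪a₂, b₁ - b₂⟫| := hsplit ▸ abs_add_le _ _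
    _ ≤ ‖a₁‖ * ‖b₁ + b₂‖ + ‖a₂‖ * ‖b₁ - b₂‖ :=
        add_le_add (abs_real_inner_le_norm _ _) (abs_real_inner_le_norm _ _)
    _ ≤ ‖b₁ + b₂‖ + ‖b₁ - b₂‖ :=
        add_le_add (mul_le_of_le_one_left (norm_nonneg _) ha₁)
          (mul_le_of_le_one_left (norm_nonneg _) ha₂)
    _ ≤ 2 * √(‖b₁‖ ^ 2 + ‖b₂‖ ^ 2) := norm_add_add_norm_sub_le b₁ b₂
    _ ≤ 2 * √2 := by gcongr

end InnerProductSpace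

lemma EuclideanSpace.inner_fin_three (a b : EuclideanSpace ℝ (Fin 3)) :
    ⟪a, b⟫ = a 0 * b 0 + a 1 * b 1 + a 2 * b 2 := by
  simp only [PiLp.inner_apply, RCLike.inner_apply, conj_trivial, Fin.sum_univ_three, mul_comm]

lemma pauliVec_eq (v : EuclideanSpace ℝ (Fin 3)) :
    pauliVec v = !![(v 2 : ℂ), v 0 - v 1 * Complex.I; v 0 + v 1 * Complex.I, -v 2] := by
  ext i j
  fin_cases i <;> fin_cases j <;> simp [pauliVec, σ₁, σ₂, σ₃, sub_eq_add_neg, mul_comm]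

lemma trace_pauliVec (v : EuclideanSpace ℝ (Fin 3)) : (pauliVec v).trace = 0 := by
  rw [pauliVec_eq, trace_fin_two_of, add_neg_cancel]

lemma trace_σ₁_mul_pauliVec (v : EuclideanSpace ℝ (Fin 3)) :
    (σ₁ * pauliVec v).trace = 2 * v 0 := by
  rw [pauliVec_eq, σ₁, mul_fin_two, trace_fin_two_of]; ring

lemma trace_σ₂_mul_pauliVec (v : EuclideanSpace ℝ (Fin 3)) :
    (σ₂ * pauliVec v).trace = 2 * v 1 := by
  rw [pauliVec_eq, σ₂, mul_fin_two, trace_fin_two_of]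
  linear_combination (-2 * v 1 : ℂ) * Complex.I_sq

lemma trace_σ₃_mul_pauliVec (v : EuclideanSpace ℝ (Fin 3)) :
    (σ₃ * pauliVec v).trace = 2 * v 2 := by
  rw [pauliVec_eq, σ₃, mul_fin_two, trace_fin_two_of]; ring

def steeringState (s : ℝ) : Matrix (Fin 2 × Fin 2) (Fin 2 × Fin 2) ℂ :=
  (1/4 : ℝ) • ((1 : Matrix (Fin 2 × Fin 2) (Fin 2 × Fin 2) ℂ)
      + (1 - s) • (σ₃ ⊗ₖ (1 : Matrix (Fin 2) (Fin 2) ℂ))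
      - s • (σ₁ ⊗ₖ σ₁ + σ₂ ⊗ₖ σ₂ + σ₃ ⊗ₖ σ₃))

-- `tr (X ⊗ Y) = tr X · tr Y`, and `b·σ` is traceless, so only the `σᵢ ⊗ σᵢ` terms contribute.
lemma corrE_steeringState (s : ℝ) (a b : EuclideanSpace ℝ (Fin 3)) :
    corrE (steeringState s) a b = -s * ⟪a, b⟫ := by
  rw [corrE, steeringState, ← one_kronecker_one]
  simp only [Matrix.smul_mul, Matrix.add_mul, Matrix.sub_mul, ← Matrix.mul_kronecker_mul,
    Matrix.one_mul, trace_smul, trace_add, trace_sub, trace_kronecker, trace_pauliVec,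
    trace_σ₁_mul_pauliVec, trace_σ₂_mul_pauliVec, trace_σ₃_mul_pauliVec, mul_zero, zero_add,
    smul_zero, Complex.real_smul]
  rw [EuclideanSpace.inner_fin_three, ← Complex.ofReal_re (-s * _)]
  congr 1
  push_cast
  ring

lemma CHSHval_steeringState_le {s : ℝ} (hs : |s| ≤ √2 / 2)
    {a₁ a₂ b₁ b₂ : EuclideanSpace ℝ (Fin 3)}
    (ha₁ : ‖a₁‖ ≤ 1) (ha₂ : ‖a₂‖ ≤ 1) (hb₁ : ‖b₁‖ ≤ 1) (hb₂ : ‖b₂‖ ≤ 1) :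
    CHSHval (steeringState s) a₁ a₂ b₁ b₂ ≤ 2 := by
  have hval : CHSHval (steeringState s) a₁ a₂ b₁ b₂
      = -s * (⟪a₁, b₁⟫ + ⟪a₂, b₁⟫ + ⟪a₁, b₂⟫ - ⟪a₂, b₂⟫) := by
    simp only [CHSHval, corrE_steeringState]; ring
  calc CHSHval (steeringState s) a₁ a₂ b₁ b₂
      ≤ |s| * |⟪a₁, b₁⟫ + ⟪a₂, b₁⟫ + ⟪a₁, b₂⟫ - ⟪a₂, b₂⟫| := by
        rw [hval, ← abs_neg s, ← abs_mul]; exact le_abs_self _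
    _ ≤ √2 / 2 * (2 * √2) :=
        mul_le_mul hs (abs_chsh_inner_le ha₁ ha₂ hb₁ hb₂) (abs_nonneg _) (by positivity)
    _ = 2 := by
        rw [show √2 / 2 * (2 * √2) = √2 * √2 by ring, Real.mul_self_sqrt zero_le_two]

lemma Matrix.PosSemidef.re_diag_nonneg {n : Type*} [Fintype n] {A : Matrix n n ℂ}
    (hA : A.PosSemidef) (i : n) : 0 ≤ (A i i).re :=
  (Complex.le_def.mp hA.diag_nonneg).1

lemma Matrix.PosSemidef.re_apply_zero_one_sq_le {A : Matrix (Fin 2) (Fin 2) ℂ}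
    (hA : A.PosSemidef) : (A 0 1).re ^ 2 ≤ (A 0 0).re * (A 1 1).re := by
  have hdet := (Complex.le_def.mp hA.det_nonneg).1
  have h10 : A 1 0 = star (A 0 1) := by
    simpa using (congrFun (congrFun hA.1 1) 0).symm
  have hd0 : (A 0 0).im = 0 := by
    simpa using Complex.conj_eq_iff_im.mp (congrFun (congrFun hA.1 0) 0)
  have hd1 : (A 1 1).im = 0 := by
    simpa using Complex.conj_eq_iff_im.mp (congrFun (congrFun hA.1 1) 1)
  rw [det_fin_two, h10] at hdet
  simp only [Complex.zero_re, Complex.sub_re, Complex.mul_re, hd0, hd1, RCLike.star_def,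
    Complex.conj_re, Complex.conj_im] at hdet
  nlinarith [sq_nonneg (A 0 1).im]

lemma sum_mul_le_sqrt_mul_sqrt_of_sq_le {ι : Type*} (t : Finset ι) {c z x y : ι → ℝ}
    (hc : ∀ i, |c i| ≤ 1) (hx : ∀ i, 0 ≤ x i) (hy : ∀ i, 0 ≤ y i)
    (hz : ∀ i, z i ^ 2 ≤ x i * y i) :
    ∑ i ∈ t, c i * z i ≤ √(∑ i ∈ t, x i) * √(∑ i ∈ t, y i) := by
  refine le_trans (Finset.sum_le_sum fun i _ => ?_) (Real.sum_sqrt_mul_sqrt_le t hx hy)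
  calc c i * z i ≤ |c i| * |z i| := abs_mul (c i) (z i) ▸ le_abs_self _
    _ ≤ |z i| := mul_le_of_le_one_left (abs_nonneg _) (hc i)
    _ ≤ √(x i) * √(y i) := by
        rw [← Real.sqrt_mul (hx i), ← Real.sqrt_sq_eq_abs]; exact Real.sqrt_le_sqrt (hz i)

lemma sq_add_self_le_one_of_moments {ι : Type*} [Fintype ι] {s : ℝ} {c r x y z : ι → ℝ}
    (hc : ∀ i, |c i| ≤ 1) (hr : ∀ i, r i ∈ Set.Icc (0 : ℝ) 1)
    (hx : ∀ i, 0 ≤ x i) (hy : ∀ i, 0 ≤ y i) (hz : ∀ i, z i ^ 2 ≤ x i * y i)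
    (hxsum : ∑ i, x i = 1 / 2) (hysum : ∑ i, y i = 1 / 2)
    (hrx : ∑ i, r i * x i = s / 2) (hry : ∑ i, r i * y i = 0) (hcz : ∑ i, c i * z i = s / 2) :
    s ^ 2 + s ≤ 1 := by
  have hry0 : ∀ i, r i * y i = 0 := fun i =>
    (Finset.sum_eq_zero_iff_of_nonneg fun j _ => mul_nonneg (hr j).1 (hy j)).mp hry i
      (Finset.mem_univ i)
  have hx' : ∀ i, 0 ≤ (1 - r i) * x i := fun i => mul_nonneg (by linarith [(hr i).2]) (hx i)
  have hz' : ∀ i, z i ^ 2 ≤ (1 - r i) * x i * y i := fun i => by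
    linear_combination (hz i) + x i * hry0 i
  have hx'sum : ∑ i, (1 - r i) * x i = (1 - s) / 2 := by
    simp only [sub_mul, one_mul, Finset.sum_sub_distrib, hxsum, hrx]; ring
  have hs0 : 0 ≤ s := by
    linarith [Finset.sum_nonneg fun i (_ : i ∈ Finset.univ) => mul_nonneg (hr i).1 (hx i)]
  have hs1 : 0 ≤ 1 - s := by linarith [Finset.sum_nonneg fun i (_ : i ∈ Finset.univ) => hx' i]
  have hcs := sum_mul_le_sqrt_mul_sqrt_of_sq_le Finset.univ hc hx' hy hz'
  rw [hcz, hx'sum, hysum, ← Real.sqrt_mul (by linarith)] at hcs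
  nlinarith [Real.sq_sqrt (show 0 ≤ (1 - s) / 2 * (1 / 2) by positivity)]

lemma re_sum_smul_apply {ι n : Type*} [Fintype ι] (q : ι → ℝ) (τ : ι → Matrix n n ℂ) (i j : n) :
    ((∑ l, q l • τ l) i j).re = ∑ l, q l * (τ l i j).re := by
  simp [Matrix.sum_apply, Complex.re_sum]

lemma sq_add_self_le_one_of_hasLHSModel {s : ℝ} {P : Fin 2 → Fin 2 → Matrix (Fin 2) (Fin 2) ℂ}
    (h00 : P 0 0 = (1/4 : ℝ) • ((1 : Matrix (Fin 2) (Fin 2) ℂ) - s • σ₁))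
    (h10 : P 1 0 = (1/4 : ℝ) • ((1 : Matrix (Fin 2) (Fin 2) ℂ) + s • σ₁))
    (h11 : P 1 1 = (1/4 : ℝ) • (s • (1 : Matrix (Fin 2) (Fin 2) ℂ) + s • σ₃))
    (hP : HasLHSModel P) : s ^ 2 + s ≤ 1 := by
  obtain ⟨N, τ, q, hτ, hq, hqsum, hPτ⟩ := hP
  have hentry : ∀ a m i j, (P a m i j).re = ∑ l, q a m l * (τ l i j).re := fun a m i j => by
    rw [hPτ, re_sum_smul_apply]
  have htotal : ∀ i j, (P 0 0 i j).re + (P 1 0 i j).re = ∑ l, (τ l i j).re := fun i j => by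
    simp only [hentry, ← Finset.sum_add_distrib, ← add_mul, hqsum, one_mul]
  refine sq_add_self_le_one_of_moments (c := fun l => q 1 0 l - q 0 0 l) (r := q 1 1)
    (fun l => abs_le.mpr ⟨by linarith [hq 0 0 l, hq 1 0 l], by linarith [hq 0 0 l, hq 1 0 l]⟩)
    (fun l => hq 1 1 l) (fun l => (hτ l).re_diag_nonneg 0) (fun l => (hτ l).re_diag_nonneg 1)
    (fun l => (hτ l).re_apply_zero_one_sq_le) ?_ ?_ ?_ ?_ ?_
  · rw [← htotal, h00, h10]; norm_num [σ₁]
  · rw [← htotal, h00, h10]; norm_num [σ₁]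
  · rw [← hentry, h11]; norm_num [σ₃]; ring
  · rw [← hentry, h11]; norm_num [σ₃]
  · simp only [sub_mul, Finset.sum_sub_distrib, ← hentry, h00, h10]; norm_num [σ₁]; ring

theorem hierarchy_steering_bell_general (s : ℝ)
    (hs : (Real.sqrt 5 - 1)/2 < s) (hs1 : s ≤ Real.sqrt 2 / 2)
    (ρ : Matrix (Fin 2 × Fin 2) (Fin 2 × Fin 2) ℂ)
    (hρ : ρ = (1/4 : ℝ) • ((1 : Matrix (Fin 2 × Fin 2) (Fin 2 × Fin 2) ℂ)
      + (1 - s) • (σ₃ ⊗ₖ (1 : Matrix (Fin 2) (Fin 2) ℂ))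
      - s • (σ₁ ⊗ₖ σ₁ + σ₂ ⊗ₖ σ₂ + σ₃ ⊗ₖ σ₃)))
    (P : Fin 2 → Fin 2 → Matrix (Fin 2) (Fin 2) ℂ)
    (h00 : P 0 0 = (1/4 : ℝ) • ((1 : Matrix (Fin 2) (Fin 2) ℂ) - s • σ₁))
    (h10 : P 1 0 = (1/4 : ℝ) • ((1 : Matrix (Fin 2) (Fin 2) ℂ) + s • σ₁))
    (h11 : P 1 1 = (1/4 : ℝ) • (s • (1 : Matrix (Fin 2) (Fin 2) ℂ) + s • σ₃)) :
    (∀ a1 a2 b1 b2 : EuclideanSpace ℝ (Fin 3),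
      ‖a1‖ = 1 → ‖a2‖ = 1 → ‖b1‖ = 1 → ‖b2‖ = 1 →
      CHSHval ρ a1 a2 b1 b2 ≤ 2) ∧
    ¬ HasLHSModel P := by
  have hs0 : 0 < s := by
    nlinarith [Real.sq_sqrt (show (0 : ℝ) ≤ 5 by norm_num), Real.sqrt_nonneg 5]
  refine ⟨fun a1 a2 b1 b2 ha1 ha2 hb1 hb2 => ?_, fun hLHS => ?_⟩
  · rw [show ρ = steeringState s from hρ]
    exact CHSHval_steeringState_le (abs_le.mpr ⟨by linarith, hs1⟩) ha1.le ha2.le hb1.le hb2.le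
  · have hgolden : 1 < s ^ 2 + s := by
      nlinarith [Real.sq_sqrt (show (0 : ℝ) ≤ 5 by norm_num), Real.sqrt_nonneg 5]
    linarith [sq_add_self_le_one_of_hasLHSModel h00 h10 h11 hLHS]

/-- for `s ∈ ((√5−1)/2, √2/2]`, the state
`ρ(s) = (1/4)(I₄ + (1−s) σ3⊗I₂ − s(σ1⊗σ1 + σ2⊗σ2 + σ3⊗σ3))` has CHSH value at most 2 for
all unit measurement vectors, yet its assemblage under Alice's measurements along
`(1,0,0)` and `(0,0,1)` admits no finite LHS model. -/
theorem hierarchy_steering_bell (s : ℝ)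
    (hs : (Real.sqrt 5 - 1)/2 < s) (hs1 : s ≤ Real.sqrt 2 / 2)
    (ρ : Matrix (Fin 2 × Fin 2) (Fin 2 × Fin 2) ℂ)
    (hρ : ρ = (1/4 : ℝ) • ((1 : Matrix (Fin 2 × Fin 2) (Fin 2 × Fin 2) ℂ)
      + (1 - s) • (σ₃ ⊗ₖ (1 : Matrix (Fin 2) (Fin 2) ℂ))
      - s • (σ₁ ⊗ₖ σ₁ + σ₂ ⊗ₖ σ₂ + σ₃ ⊗ₖ σ₃)))
    (P : Fin 2 → Fin 2 → Matrix (Fin 2) (Fin 2) ℂ)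
    (h00 : P 0 0 = (1/4 : ℝ) • ((1 : Matrix (Fin 2) (Fin 2) ℂ) - s • σ₁))
    (h10 : P 1 0 = (1/4 : ℝ) • ((1 : Matrix (Fin 2) (Fin 2) ℂ) + s • σ₁))
    (h01 : P 0 1 = (1/4 : ℝ) • ((2 - s) • (1 : Matrix (Fin 2) (Fin 2) ℂ) - s • σ₃))
    (h11 : P 1 1 = (1/4 : ℝ) • (s • (1 : Matrix (Fin 2) (Fin 2) ℂ) + s • σ₃)) :
    (∀ a1 a2 b1 b2 : EuclideanSpace ℝ (Fin 3),
      ‖a1‖ = 1 → ‖a2‖ = 1 → ‖b1‖ = 1 → ‖b2‖ = 1 →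
      CHSHval ρ a1 a2 b1 b2 ≤ 2) ∧
    ¬ HasLHSModel P :=
  hierarchy_steering_bell_general s hs hs1 ρ hρ P h00 h10 h11

end
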